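/- Let α ∈ (0, π/2), ν > 0, and let k₀ > 0 satisfy k₀ tanh k₀ = ν. Suppose φ : ℝ³ → ℝ is continuously differentiable on an open neighborhood of the closure of W₁^(α) and satisfies ∫_{−1}^{0} φ(x, y) cosh(k₀(y + 1)) dy = 0 for every x ∈ F^(α). Then ν ∫_{F^(α)} |φ(x, 0)|² dx ≤ (1/2) ∫_{W₁^(α)} |∂φ/∂y(x, y)|² dx dy, and consequently ν ∫_{F^(α)} |φ(x, 0)|² dx ≤ (1/2) ∫_{W₁^(α)} |∇φ|² dx dy. -/

import Mathlib

/-!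
Fix `x ∈ F^(α)` and write `u y = φ (x, y)`, `s y = sinh (k₀ (y + 1))`. Since `s (-1) = 0` and
`s' = k₀ cosh (k₀ (y + 1))`, integrating by parts turns the orthogonality of `u` to
`cosh (k₀ (y + 1))` into `∫ u' s = u 0 · sinh k₀`. Cauchy–Schwarz together with
`∫₋₁⁰ s² = (sinh k₀ cosh k₀ - k₀) / (2 k₀) ≤ sinh k₀ cosh k₀ / (2 k₀)` gives
`k₀ tanh k₀ · u(0)² ≤ ½ ∫₋₁⁰ u'²`. Integrating over `F^(α)` (Tonelli) gives the first bound,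
and `|∂φ/∂y|² ≤ |∇φ|²` the second.
-/

open MeasureTheory Real Set
open scoped ENNReal

noncomputable section

/-- The open plane sector `F^(α) = {x ∈ ℝ² : x₂ > -|x₁| tan α}`
whose vertex angle is `π + 2α`. -/
def Fsec (α : ℝ) : Set (ℝ × ℝ) := {x : ℝ × ℝ | x.2 > -|x.1| * Real.tan α}

/-- The sectorial water layer `W₁^(α) = F^(α) × (-1, 0)` of unit depth. -/
def W1 (α : ℝ) : Set ((ℝ × ℝ) × ℝ) := (Fsec α) ×ˢ Ioo (-1 : ℝ) 0

/-- The two-dimensional Laplacian of `w : ℝ × ℝ → ℝ`. -/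
def lap2 (w : ℝ × ℝ → ℝ) (x : ℝ × ℝ) : ℝ :=
  deriv (deriv (fun t => w (t, x.2))) x.1 + deriv (deriv (fun t => w (x.1, t))) x.2

/-- The three-dimensional Laplacian of `φ : (ℝ × ℝ) × ℝ → ℝ`,
points being written `(x, y)` with `x ∈ ℝ²`, `y ∈ ℝ`. -/
def lap3 (φ : (ℝ × ℝ) × ℝ → ℝ) (p : (ℝ × ℝ) × ℝ) : ℝ :=
  deriv (deriv (fun t => φ ((t, p.1.2), p.2))) p.1.1
    + deriv (deriv (fun t => φ ((p.1.1, t), p.2))) p.1.2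
    + deriv (deriv (fun t => φ (p.1, t))) p.2

/-- The partial derivative `∂φ/∂y`. -/
def dY (φ : (ℝ × ℝ) × ℝ → ℝ) (p : (ℝ × ℝ) × ℝ) : ℝ :=
  deriv (fun t => φ (p.1, t)) p.2

/-- `|∇φ|²`, the squared euclidean norm of the three-dimensional gradient of `φ`. -/
def gradSq (φ : (ℝ × ℝ) × ℝ → ℝ) (p : (ℝ × ℝ) × ℝ) : ℝ :=
  (deriv (fun t => φ ((t, p.1.2), p.2)) p.1.1) ^ 2
    + (deriv (fun t => φ ((p.1.1, t), p.2)) p.1.2) ^ 2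
    + (deriv (fun t => φ (p.1, t)) p.2) ^ 2

theorem sq_integral_mul_le_integral_sq_mul_integral_sq {X : Type*} [MeasurableSpace X]
    {μ : Measure X} {f g : X → ℝ} (hf : Integrable (fun x => f x ^ 2) μ)
    (hg : Integrable (fun x => g x ^ 2) μ) (hfg : Integrable (fun x => f x * g x) μ) :
    (∫ x, f x * g x ∂μ) ^ 2 ≤ (∫ x, f x ^ 2 ∂μ) * ∫ x, g x ^ 2 ∂μ := by
  have hquad : ∀ t : ℝ,
      0 ≤ (∫ x, g x ^ 2 ∂μ) * (t * t) + (2 * ∫ x, f x * g x ∂μ) * t + ∫ x, f x ^ 2 ∂μ := by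
    intro t
    have hexp : ∫ x, (f x + t * g x) ^ 2 ∂μ
        = (∫ x, g x ^ 2 ∂μ) * (t * t) + (2 * ∫ x, f x * g x ∂μ) * t + ∫ x, f x ^ 2 ∂μ := by
      have hpt : (fun x => (f x + t * g x) ^ 2)
          = fun x => f x ^ 2 + 2 * t * (f x * g x) + t * t * g x ^ 2 := by
        ext x; ring
      have hfirst : Integrable (fun x => f x ^ 2 + 2 * t * (f x * g x)) μ :=
        hf.add (hfg.const_mul _)
      rw [hpt, integral_add hfirst (hg.const_mul _),
        integral_add hf (hfg.const_mul _), integral_const_mul, integral_const_mul]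
      ring
    exact hexp ▸ integral_nonneg fun x => sq_nonneg _
  have := discrim_le_zero hquad
  rw [discrim] at this
  nlinarith

theorem integral_neg_one_zero_eq_setIntegral_Ioo (f : ℝ → ℝ) :
    ∫ y in (-1 : ℝ)..0, f y = ∫ y in Ioo (-1 : ℝ) 0, f y := by
  rw [intervalIntegral.integral_of_le (by norm_num), integral_Ioc_eq_integral_Ioo]

theorem hasDerivAt_mul_add_one (k y : ℝ) : HasDerivAt (fun y => k * (y + 1)) k y := by
  simpa using ((hasDerivAt_id y).add_const 1).const_mul k

theorem hasDerivAt_sinh_mul_add_one (k y : ℝ) :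
    HasDerivAt (fun y => sinh (k * (y + 1))) (k * cosh (k * (y + 1))) y :=
  ((hasDerivAt_sinh _).comp y (hasDerivAt_mul_add_one k y)).congr_deriv (mul_comm _ _)

theorem integral_sinh_mul_add_one_sq {k : ℝ} (hk : k ≠ 0) :
    ∫ y in (-1 : ℝ)..0, sinh (k * (y + 1)) ^ 2 = (sinh k * cosh k - k) / (2 * k) := by
  have hprim : ∀ y : ℝ, HasDerivAt
      (fun y => (sinh (k * (y + 1)) * cosh (k * (y + 1)) - k * (y + 1)) / (2 * k))
      (sinh (k * (y + 1)) ^ 2) y := by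
    intro y
    have hcosh : HasDerivAt (fun y => cosh (k * (y + 1))) (sinh (k * (y + 1)) * k) y :=
      (hasDerivAt_cosh _).comp y (hasDerivAt_mul_add_one k y)
    refine ((((hasDerivAt_sinh_mul_add_one k y).mul hcosh).sub
      (hasDerivAt_mul_add_one k y)).div_const _).congr_deriv ?_
    field_simp
    linear_combination cosh_sq (k * (y + 1))
  rw [intervalIntegral.integral_eq_sub_of_hasDerivAt (fun y _ => hprim y)
    ((by fun_prop : Continuous fun y => sinh (k * (y + 1)) ^ 2).intervalIntegrable _ _)]
  norm_num

theorem integral_deriv_mul_sinh_eq_of_integral_mul_cosh_eq_zero {k : ℝ} {u u' : ℝ → ℝ}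
    (hu : ∀ y ∈ Icc (-1 : ℝ) 0, HasDerivAt u (u' y) y)
    (hu' : IntervalIntegrable u' volume (-1) 0)
    (horth : ∫ y in (-1 : ℝ)..0, u y * cosh (k * (y + 1)) = 0) :
    ∫ y in (-1 : ℝ)..0, u' y * sinh (k * (y + 1)) = u 0 * sinh k := by
  have hibp := intervalIntegral.integral_mul_deriv_eq_deriv_mul
    (fun y hy => hu y (by rwa [uIcc_of_le (by norm_num)] at hy))
    (fun y _ => hasDerivAt_sinh_mul_add_one k y) hu'
    ((by fun_prop : Continuous fun y => k * cosh (k * (y + 1))).intervalIntegrable _ _)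
  have hlhs : ∫ y in (-1 : ℝ)..0, u y * (k * cosh (k * (y + 1))) = 0 := by
    simp_rw [mul_left_comm (u _) k]
    rw [intervalIntegral.integral_const_mul, horth, mul_zero]
  rw [hlhs] at hibp
  norm_num at hibp
  linarith

theorem mul_tanh_mul_sq_le_of_integral_mul_cosh_eq_zero {k : ℝ} (hk : 0 < k) {u u' : ℝ → ℝ}
    (hu : ∀ y ∈ Icc (-1 : ℝ) 0, HasDerivAt u (u' y) y) (hu' : ContinuousOn u' (Icc (-1) 0))
    (horth : ∫ y in Ioo (-1 : ℝ) 0, u y * cosh (k * (y + 1)) = 0) :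
    k * tanh k * u 0 ^ 2 ≤ 1 / 2 * ∫ y in Ioo (-1 : ℝ) 0, u' y ^ 2 := by
  set A := ∫ y in Ioo (-1 : ℝ) 0, u' y ^ 2
  have hsinh : ContinuousOn (fun y => sinh (k * (y + 1))) (Icc (-1) 0) := by fun_prop
  have hint : ∀ {f : ℝ → ℝ}, ContinuousOn f (Icc (-1) 0) → IntegrableOn f (Ioo (-1) 0) :=
    fun hf => hf.integrableOn_Icc.mono_set Ioo_subset_Icc_self
  have hcs : (u 0 * sinh k) ^ 2 ≤ A * ((sinh k * cosh k - k) / (2 * k)) := by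
    have := sq_integral_mul_le_integral_sq_mul_integral_sq (hint (hu'.pow 2))
      (hint (hsinh.pow 2)) (hint (hu'.mul hsinh))
    rwa [← integral_neg_one_zero_eq_setIntegral_Ioo,
      integral_deriv_mul_sinh_eq_of_integral_mul_cosh_eq_zero hu
        (hu'.intervalIntegrable_of_Icc (by norm_num))
        (by rwa [integral_neg_one_zero_eq_setIntegral_Ioo]),
      ← integral_neg_one_zero_eq_setIntegral_Ioo (fun y => sinh (k * (y + 1)) ^ 2),
      integral_sinh_mul_add_one_sq hk.ne'] at this
  have hA : 0 ≤ A := setIntegral_nonneg measurableSet_Ioo fun y _ => sq_nonneg _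
  have hs : 0 < sinh k := sinh_pos_iff.2 hk
  have hc : 0 < cosh k := cosh_pos k
  have hkey : 2 * k * sinh k * u 0 ^ 2 ≤ cosh k * A := by
    rw [mul_div_assoc', le_div_iff₀ (by positivity)] at hcs
    nlinarith [mul_nonneg hk.le hA]
  rw [tanh_eq_sinh_div_cosh, mul_div_assoc', div_mul_eq_mul_div, div_le_iff₀ hc]
  linarith

theorem ofReal_mul_tanh_mul_sq_le_of_integral_mul_cosh_eq_zero {k : ℝ} (hk : 0 < k)
    {u u' : ℝ → ℝ} (hu : ∀ y ∈ Icc (-1 : ℝ) 0, HasDerivAt u (u' y) y)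
    (hu' : ContinuousOn u' (Icc (-1) 0))
    (horth : ∫ y in Ioo (-1 : ℝ) 0, u y * cosh (k * (y + 1)) = 0) :
    ENNReal.ofReal (k * tanh k) * ENNReal.ofReal (u 0 ^ 2)
      ≤ 1 / 2 * ∫⁻ y in Ioo (-1 : ℝ) 0, ENNReal.ofReal (u' y ^ 2) := by
  have hint : IntegrableOn (fun y => u' y ^ 2) (Ioo (-1) 0) :=
    (hu'.pow 2).integrableOn_Icc.mono_set Ioo_subset_Icc_self
  rw [← ofReal_integral_eq_lintegral_ofReal hint (ae_of_all _ fun y => sq_nonneg _),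
    ← ENNReal.ofReal_mul' (sq_nonneg _), show (1 / 2 : ℝ≥0∞) = ENNReal.ofReal (1 / 2) by
      rw [ENNReal.ofReal_div_of_pos two_pos]; simp,
    ← ENNReal.ofReal_mul (by norm_num)]
  exact ENNReal.ofReal_le_ofReal
    (mul_tanh_mul_sq_le_of_integral_mul_cosh_eq_zero hk hu hu' horth)

theorem isOpen_Fsec (α : ℝ) : IsOpen (Fsec α) :=
  isOpen_lt (continuous_fst.abs.neg.mul continuous_const) continuous_snd

theorem Fsec_prod_Icc_subset_closure_W1 (α : ℝ) : Fsec α ×ˢ Icc (-1 : ℝ) 0 ⊆ closure (W1 α) := by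
  rw [W1, closure_prod_eq, closure_Ioo (by norm_num : (-1 : ℝ) ≠ 0)]
  exact prod_mono subset_closure le_rfl

section Slices

variable {φ : (ℝ × ℝ) × ℝ → ℝ} {U : Set ((ℝ × ℝ) × ℝ)} {p : (ℝ × ℝ) × ℝ}

theorem hasDerivAt_dY (hφ : DifferentiableAt ℝ φ p) :
    HasDerivAt (fun t => φ (p.1, t)) (dY φ p) p.2 :=
  (hφ.comp p.2 ((differentiableAt_const _).prodMk differentiableAt_id)).hasDerivAt

theorem dY_eq_fderiv (hφ : DifferentiableAt ℝ φ p) : dY φ p = fderiv ℝ φ p (0, 1) :=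
  (hφ.hasFDerivAt.comp_hasDerivAt p.2 ((hasDerivAt_const _ _).prodMk (hasDerivAt_id _))).deriv

theorem continuousOn_dY (hU : IsOpen U) (hφ : ContDiffOn ℝ 1 φ U) : ContinuousOn (dY φ) U :=
  ((hφ.continuousOn_fderiv_of_isOpen hU le_rfl).clm_apply continuousOn_const).congr fun _ hp =>
    dY_eq_fderiv ((hφ.differentiableOn one_ne_zero).differentiableAt (hU.mem_nhds hp))

theorem sq_dY_le_gradSq (φ : (ℝ × ℝ) × ℝ → ℝ) (p : (ℝ × ℝ) × ℝ) : dY φ p ^ 2 ≤ gradSq φ p :=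
  le_add_of_nonneg_left (add_nonneg (sq_nonneg _) (sq_nonneg _))

end Slices

theorem free_surface_trace_bound_general
    (α : ℝ) (ν k₀ : ℝ) (hk₀ : 0 < k₀)
    (hroot : k₀ * Real.tanh k₀ = ν)
    (φ : (ℝ × ℝ) × ℝ → ℝ)
    (hsmooth : ∃ U : Set ((ℝ × ℝ) × ℝ), IsOpen U ∧ closure (W1 α) ⊆ U ∧ ContDiffOn ℝ 1 φ U)
    (hw0 : ∀ x ∈ Fsec α, ∫ y in Ioo (-1 : ℝ) 0, φ (x, y) * Real.cosh (k₀ * (y + 1)) = 0) :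
    ENNReal.ofReal ν * ∫⁻ x in Fsec α, ENNReal.ofReal ((φ (x, 0)) ^ 2)
      ≤ (1 / 2 : ℝ≥0∞) * ∫⁻ p in W1 α, ENNReal.ofReal ((dY φ p) ^ 2) ∧
    ENNReal.ofReal ν * ∫⁻ x in Fsec α, ENNReal.ofReal ((φ (x, 0)) ^ 2)
      ≤ (1 / 2 : ℝ≥0∞) * ∫⁻ p in W1 α, ENNReal.ofReal (gradSq φ p) := by
  obtain ⟨U, hU, hWU, hφ⟩ := hsmooth
  subst hroot
  have hUx : ∀ x ∈ Fsec α, ∀ y ∈ Icc (-1 : ℝ) 0, (x, y) ∈ U := fun x hx y hy =>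
    hWU (Fsec_prod_Icc_subset_closure_W1 α ⟨hx, hy⟩)
  have hW : W1 α ⊆ U := fun p hp => hUx p.1 hp.1 p.2 (Ioo_subset_Icc_self hp.2)
  have hdiff : ∀ p ∈ U, DifferentiableAt ℝ φ p := fun p hp =>
    (hφ.differentiableOn one_ne_zero).differentiableAt (hU.mem_nhds hp)
  have htrace : ENNReal.ofReal (k₀ * tanh k₀) * ∫⁻ x in Fsec α, ENNReal.ofReal (φ (x, 0) ^ 2)
      ≤ 1 / 2 * ∫⁻ p in W1 α, ENNReal.ofReal (dY φ p ^ 2) := calc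
    _ = ∫⁻ x in Fsec α, ENNReal.ofReal (k₀ * tanh k₀) * ENNReal.ofReal (φ (x, 0) ^ 2) :=
        (lintegral_const_mul' _ _ ENNReal.ofReal_ne_top).symm
    _ ≤ ∫⁻ x in Fsec α, 1 / 2 * ∫⁻ y in Ioo (-1 : ℝ) 0, ENNReal.ofReal (dY φ (x, y) ^ 2) :=
        setLIntegral_mono' (isOpen_Fsec α).measurableSet fun x hx =>
          ofReal_mul_tanh_mul_sq_le_of_integral_mul_cosh_eq_zero hk₀
            (fun y hy => hasDerivAt_dY (hdiff _ (hUx x hx y hy)))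
            ((continuousOn_dY hU hφ).comp (Continuous.prodMk_right x).continuousOn (hUx x hx))
            (hw0 x hx)
    _ = 1 / 2 * ∫⁻ x in Fsec α, ∫⁻ y in Ioo (-1 : ℝ) 0, ENNReal.ofReal (dY φ (x, y) ^ 2) :=
        lintegral_const_mul' _ _ (by norm_num)
    _ = 1 / 2 * ∫⁻ p in W1 α, ENNReal.ofReal (dY φ p ^ 2) := by
        rw [W1, Measure.volume_eq_prod (ℝ × ℝ) ℝ, setLIntegral_prod]
        exact (ENNReal.continuous_ofReal.comp_continuousOn
          (((continuousOn_dY hU hφ).mono hW).pow 2)).aemeasurable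
          ((isOpen_Fsec α).measurableSet.prod measurableSet_Ioo)
  exact ⟨htrace, htrace.trans (by gcongr with p; exact sq_dY_le_gradSq φ p)⟩

/-- if John's auxiliary function of `φ` vanishes on `F^(α)`, then
`ν ∫_{F^(α)} |φ(x,0)|² dx ≤ (1/2) ∫_{W₁^(α)} |∂φ/∂y|²`, and consequently
`ν ∫_{F^(α)} |φ(x,0)|² dx ≤ (1/2) ∫_{W₁^(α)} |∇φ|²`. -/
theorem free_surface_trace_bound
    (α : ℝ) (hα : α ∈ Ioo 0 (π / 2)) (ν k₀ : ℝ) (hν : 0 < ν) (hk₀ : 0 < k₀)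
    (hroot : k₀ * Real.tanh k₀ = ν)
    (φ : (ℝ × ℝ) × ℝ → ℝ)
    (hsmooth : ∃ U : Set ((ℝ × ℝ) × ℝ), IsOpen U ∧ closure (W1 α) ⊆ U ∧ ContDiffOn ℝ 1 φ U)
    (hw0 : ∀ x ∈ Fsec α, ∫ y in Ioo (-1 : ℝ) 0, φ (x, y) * Real.cosh (k₀ * (y + 1)) = 0) :
    ENNReal.ofReal ν * ∫⁻ x in Fsec α, ENNReal.ofReal ((φ (x, 0)) ^ 2)
      ≤ (1 / 2 : ℝ≥0∞) * ∫⁻ p in W1 α, ENNReal.ofReal ((dY φ p) ^ 2) ∧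
    ENNReal.ofReal ν * ∫⁻ x in Fsec α, ENNReal.ofReal ((φ (x, 0)) ^ 2)
      ≤ (1 / 2 : ℝ≥0∞) * ∫⁻ p in W1 α, ENNReal.ofReal (gradSq φ p) :=
  free_surface_trace_bound_general α ν k₀ hk₀ hroot φ hsmooth hw0
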